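/- If u and v are two pendant vertices of an oriented graph G^σ with the same neighbor, then sr(G^σ) = sr(G^σ - u) = sr(G^σ - v). -/

import Mathlib

/-- S is the skew-adjacency matrix of some oriented graph: it is skew-symmetric
with entries in {0, 1, -1}. -/
def IsSkewAdjacency {V : Type} [Fintype V] [DecidableEq V] (S : Matrix V V ℝ) : Prop :=
  S.transpose = -S ∧ ∀ i j : V, S i j = 0 ∨ S i j = 1 ∨ S i j = -1

/-- S is the skew-adjacency matrix of an orientation of the simple graph G. -/
def IsSkewAdjacencyOf {V : Type} [Fintype V] [DecidableEq V]
    (S : Matrix V V ℝ) (G : SimpleGraph V) : Prop :=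
  IsSkewAdjacency S ∧ ∀ i j : V, S i j ≠ 0 ↔ G.Adj i j

/-!
The rows of `S` at two pendant twins `u`, `v` are both supported on the common neighbour `w`,
so row `u` is a multiple of row `v`, and by skew-symmetry column `u` is the same multiple of
column `v`. Deleting a column that is a multiple of another one leaves the column space
unchanged, and likewise for rows, so deleting row and column `u` keeps the rank.
-/

namespace Matrix

variable {m n K : Type*}

theorem rank_submatrix_col_ne_of_col_eq_smul [CommSemiring K] [Fintype n] [DecidableEq n]
    (A : Matrix m n K) {u v : n} (huv : u ≠ v) {c : K} (h : A.col u = c • A.col v) :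
    (A.submatrix id (Subtype.val : {j // j ≠ u} → n)).rank = A.rank := by
  rw [rank_eq_finrank_span_cols, rank_eq_finrank_span_cols]
  refine congrArg (fun s : Submodule K (m → K) => Module.finrank K s) (le_antisymm ?_ ?_)
  · rw [Submodule.span_le]
    rintro _ ⟨j, rfl⟩
    exact Submodule.subset_span ⟨j, rfl⟩
  · rw [Submodule.span_le]
    rintro _ ⟨j, rfl⟩
    by_cases hj : j = u
    · subst hj
      rw [h]
      exact Submodule.smul_mem _ _ (Submodule.subset_span ⟨⟨v, huv.symm⟩, rfl⟩)
    · exact Submodule.subset_span ⟨⟨j, hj⟩, rfl⟩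

theorem rank_submatrix_row_ne_of_row_eq_smul [Field K] [Fintype m] [Fintype n] [DecidableEq m]
    (A : Matrix m n K) {u v : m} (huv : u ≠ v) {c : K} (h : A.row u = c • A.row v) :
    (A.submatrix (Subtype.val : {i // i ≠ u} → m) id).rank = A.rank := by
  rw [← rank_transpose (A.submatrix _ _), ← rank_transpose A]
  exact Aᵀ.rank_submatrix_col_ne_of_col_eq_smul huv h

theorem col_eq_smul_of_transpose_eq_neg_of_row_eq_smul [Ring K] {A : Matrix n n K}
    (hA : Aᵀ = -A) {u v : n} {c : K} (h : A.row u = c • A.row v) :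
    A.col u = c • A.col v := by
  have hskew (i j : n) : A j i = -A i j := by simpa using congrFun (congrFun hA i) j
  funext j
  simpa [hskew u j, hskew v j] using congrArg Neg.neg (congrFun h j)

theorem rank_submatrix_ne_of_transpose_eq_neg_of_row_eq_smul
    [Field K] [Fintype n] [DecidableEq n] {A : Matrix n n K} (hA : Aᵀ = -A) {u v : n}
    (huv : u ≠ v) {c : K}
    (h : A.row u = c • A.row v) :
    (A.submatrix (Subtype.val : {i // i ≠ u} → n) (Subtype.val : {i // i ≠ u} → n)).rank =
      A.rank :=
  calc _ = (A.submatrix id (Subtype.val : {i // i ≠ u} → n)).rank :=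
        (A.submatrix id _).rank_submatrix_row_ne_of_row_eq_smul huv
          (congrArg (· ∘ Subtype.val) h)
    _ = A.rank := A.rank_submatrix_col_ne_of_col_eq_smul huv
          (col_eq_smul_of_transpose_eq_neg_of_row_eq_smul hA h)

end Matrix

theorem IsSkewAdjacencyOf.row_eq_smul_of_pendant_twins {V : Type} [Fintype V] [DecidableEq V]
    {S : Matrix V V ℝ} {G : SimpleGraph V} (hS : IsSkewAdjacencyOf S G) {u v w : V}
    (hv : G.Adj v w) (hupend : ∀ x, G.Adj u x → x = w) (hvpend : ∀ x, G.Adj v x → x = w) :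
    S.row u = (S u w / S v w) • S.row v := by
  funext x
  by_cases hx : x = w
  · subst hx
    simp [div_mul_cancel₀ _ ((hS.2 v x).2 hv)]
  · have hux : S u x = 0 := not_not.1 fun h => hx (hupend x ((hS.2 u x).1 h))
    have hvx : S v x = 0 := not_not.1 fun h => hx (hvpend x ((hS.2 v x).1 h))
    simp [hux, hvx]

/-- Deleting one of two pendant twins (pendant vertices with a common
neighbour) does not change the skew-rank. -/
theorem skewRank_delete_pendant_twin
    {V : Type} [Fintype V] [DecidableEq V] (G : SimpleGraph V)
    (S : Matrix V V ℝ) (hS : IsSkewAdjacencyOf S G)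
    (u v w : V) (huv : u ≠ v)
    (hu : G.Adj u w) (hv : G.Adj v w)
    (hupend : ∀ x : V, G.Adj u x → x = w)
    (hvpend : ∀ x : V, G.Adj v x → x = w) :
    S.rank =
      (S.submatrix (fun x : {x : V // x ≠ u} => (x : V))
        (fun x : {x : V // x ≠ u} => (x : V))).rank ∧
    S.rank =
      (S.submatrix (fun x : {x : V // x ≠ v} => (x : V))
        (fun x : {x : V // x ≠ v} => (x : V))).rank :=
  ⟨(Matrix.rank_submatrix_ne_of_transpose_eq_neg_of_row_eq_smul hS.1.1 huv
      (hS.row_eq_smul_of_pendant_twins hv hupend hvpend)).symm,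
    (Matrix.rank_submatrix_ne_of_transpose_eq_neg_of_row_eq_smul hS.1.1 huv.symm
      (hS.row_eq_smul_of_pendant_twins hu hvpend hupend)).symm⟩
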